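/- If G is a triangle-free regular graph in which every partial proper edge coloring of at most k < Δ(G) pairwise nonadjacent (independent) edges extends to a proper χ'(G)-edge coloring of G, then every partial proper edge coloring of at most k+1 independent edges of G □ K_2 extends to a proper (χ'(G)+1)-edge coloring of G □ K_2. -/

import Mathlib

open SimpleGraph

variable {V : Type*}

/-- Two edges of `G` are adjacent if both are edges, they are distinct,
and they share a vertex. -/
def EdgeAdj (G : SimpleGraph V) (e f : Sym2 V) : Prop :=
  e ∈ G.edgeSet ∧ f ∈ G.edgeSet ∧ e ≠ f ∧ ∃ v, v ∈ e ∧ v ∈ f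

/-- A proper edge coloring (with natural-number colors). -/
def IsProperEdgeColoring (G : SimpleGraph V) (C : Sym2 V → ℕ) : Prop :=
  ∀ ⦃e f⦄, EdgeAdj G e f → C e ≠ C f

/-- A partial proper edge coloring: colored edges are edges of `G`, and
adjacent colored edges receive distinct colors. -/
def IsPartialProperEdgeColoring (G : SimpleGraph V) (φ : Sym2 V → Option ℕ) : Prop :=
  (∀ e, φ e ≠ none → e ∈ G.edgeSet) ∧
  ∀ ⦃e f⦄, EdgeAdj G e f → φ e ≠ none → φ e ≠ φ f

/-- The partial coloring uses colors from `{0, ..., t-1}`. -/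
def UsesColors (φ : Sym2 V → Option ℕ) (t : ℕ) : Prop :=
  ∀ e a, φ e = some a → a < t

/-- The (total) coloring uses colors from `{0, ..., t-1}` on all edges of `G`. -/
def ColorsBelow (G : SimpleGraph V) (C : Sym2 V → ℕ) (t : ℕ) : Prop :=
  ∀ e ∈ G.edgeSet, C e < t

/-- `C` agrees with the partial coloring `φ` on all precolored edges. -/
def ExtendsColoring (C : Sym2 V → ℕ) (φ : Sym2 V → Option ℕ) : Prop :=
  ∀ e a, φ e = some a → C e = a

/-- `φ` extends to a proper edge coloring of `G` with `t` colors. -/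
def Extendable (G : SimpleGraph V) (φ : Sym2 V → Option ℕ) (t : ℕ) : Prop :=
  ∃ C, IsProperEdgeColoring G C ∧ ColorsBelow G C t ∧ ExtendsColoring C φ

/-- The set of precolored edges of `φ`. -/
def Precolored (φ : Sym2 V → Option ℕ) : Set (Sym2 V) := {e | φ e ≠ none}

/-- The chromatic index: least `t` admitting a proper edge coloring with `t` colors. -/
noncomputable def chromaticIndex (G : SimpleGraph V) : ℕ :=
  sInf {t | ∃ C, IsProperEdgeColoring G C ∧ ColorsBelow G C t}

/-- A set of edges is independent (a matching) if no two distinct members share a vertex. -/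
def IndependentEdges (S : Set (Sym2 V)) : Prop :=
  ∀ e ∈ S, ∀ f ∈ S, e ≠ f → ∀ v, v ∈ e → v ∉ f

/-!
Split the precoloured edges of `G □ K₂` into those of copy `0`, of copy `1` and the rungs. Since
`G` is triangle-free and `Δ`-regular and at most `k + 1 ≤ Δ` edges are precoloured, Hall's theorem
gives every precoloured rung `j` a private neighbour `w j` off all precoloured edges. After
permuting colours, the colour `t = χ'(G)` is unused. Precolour each copy with its own edges and
the pendant edges `s(j, w j)` coloured like the rung at `j`, extend by hypothesis, and recolour the
pendant edges with the new colour `t`: the rung colour is then missing at `j` and `w j` in both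
copies and `t` is missing everywhere else, which colours the rungs. This needs at most `k`
precoloured edges per copy; otherwise all precoloured copy edges lie in one copy, and one colour
class is left out, the rest extended, and the omitted class restored by a Kempe change with `t`.
-/

def MissingAt (G : SimpleGraph V) (C : Sym2 V → ℕ) (a : ℕ) (v : V) : Prop :=
  ∀ e ∈ G.edgeSet, v ∈ e → C e ≠ a

def MatchingExtendable (G : SimpleGraph V) (k t : ℕ) : Prop :=
  ∀ φ : Sym2 V → Option ℕ, IsPartialProperEdgeColoring G φ → UsesColors φ t →
    IndependentEdges (Precolored φ) → (Precolored φ).ncard ≤ k → Extendable G φ t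

section EdgeColoring

variable {G : SimpleGraph V} {C : Sym2 V → ℕ}

lemma EdgeAdj.symm {e f : Sym2 V} (h : EdgeAdj G e f) : EdgeAdj G f e :=
  let ⟨he, hf, hne, v, hve, hvf⟩ := h
  ⟨hf, he, hne.symm, v, hvf, hve⟩

lemma IsPartialProperEdgeColoring.of_independentEdges {φ : Sym2 V → Option ℕ}
    (hG : ∀ e, φ e ≠ none → e ∈ G.edgeSet) (hind : IndependentEdges (Precolored φ)) :
    IsPartialProperEdgeColoring G φ := by
  refine ⟨hG, fun e f hef he hfe => ?_⟩
  obtain ⟨-, -, hne, v, hve, hvf⟩ := hef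
  exact hind e he f (fun h => he (hfe.trans h)) hne v hve hvf

lemma IsProperEdgeColoring.degree_le [Fintype V] [DecidableRel G.Adj] {t : ℕ}
    (hC : IsProperEdgeColoring G C) (ht : ColorsBelow G C t) (v : V) : G.degree v ≤ t := by
  classical
  rw [← card_incidenceFinset_eq_degree, ← Finset.card_range t]
  refine Finset.card_le_card_of_injOn C (fun e he => ?_) fun e he f hf hef => ?_
  · exact Finset.mem_range.2 (ht e ((mem_incidenceFinset G v e).1 he).1)
  · by_contra hne
    rw [Finset.mem_coe, mem_incidenceFinset] at he hf
    exact hC ⟨he.1, hf.1, hne, v, he.2, hf.2⟩ hef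

lemma exists_missingAt [Fintype V] [DecidableRel G.Adj] (C : Sym2 V → ℕ) {t : ℕ} {v : V}
    (hv : G.degree v ≤ t) : ∃ a < t + 1, MissingAt G C a v := by
  classical
  obtain ⟨a, ha, hmiss⟩ := Finset.exists_mem_notMem_of_card_lt_card
    (s := (G.incidenceFinset v).image C) (t := Finset.range (t + 1)) <| by
      rw [Finset.card_range]
      exact (Finset.card_image_le.trans (card_incidenceFinset_eq_degree G v).le).trans_lt
        (Nat.lt_succ_of_le hv)
  refine ⟨a, Finset.mem_range.1 ha, fun e he hve hea => hmiss ?_⟩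
  exact Finset.mem_image.2 ⟨e, (mem_incidenceFinset G v e).2 ⟨he, hve⟩, hea⟩

end EdgeColoring

section Recoloring

variable {G : SimpleGraph V} {C : Sym2 V → ℕ} {S : Set (Sym2 V)} [DecidablePred (· ∈ S)]

lemma MissingAt.piecewise_of_notMem {g : Sym2 V → ℕ} {a : ℕ} {v : V} (h : MissingAt G C a v)
    (hv : ∀ e ∈ S, v ∉ e) : MissingAt G (S.piecewise g C) a v := fun e he hve => by
  rw [S.piecewise_eq_of_notMem _ _ fun heS => hv e heS hve]
  exact h e he hve

lemma ColorsBelow.piecewise_const {a n : ℕ} (hC : ColorsBelow G C n) (ha : a < n) :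
    ColorsBelow G (S.piecewise (fun _ => a) C) n := fun e he => by
  by_cases heS : e ∈ S
  · simpa [heS] using ha
  · simpa [heS] using hC e he

lemma IsProperEdgeColoring.piecewise_const (hC : IsProperEdgeColoring G C) {a : ℕ}
    (hS : IndependentEdges S) (ha : ∀ e ∈ S, ∀ v ∈ e, MissingAt G C a v) :
    IsProperEdgeColoring G (S.piecewise (fun _ => a) C) := by
  have key : ∀ {e f}, EdgeAdj G e f → e ∈ S → f ∉ S →
      S.piecewise (fun _ => a) C e ≠ S.piecewise (fun _ => a) C f := by
    rintro e f ⟨-, hf, -, v, hve, hvf⟩ he hfS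
    rw [S.piecewise_eq_of_mem _ _ he, S.piecewise_eq_of_notMem _ _ hfS]
    exact (ha e he v hve f hf hvf).symm
  intro e f hef
  by_cases he : e ∈ S <;> by_cases hf : f ∈ S
  · obtain ⟨-, -, hne, v, hve, hvf⟩ := hef
    exact absurd hvf (hS e he f hf hne v hve)
  · exact key hef he hf
  · exact (key hef.symm hf he).symm
  · rw [S.piecewise_eq_of_notMem _ _ he, S.piecewise_eq_of_notMem _ _ hf]
    exact hC hef

lemma IsProperEdgeColoring.missingAt_piecewise_const (hC : IsProperEdgeColoring G C) {a : ℕ}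
    {e : Sym2 V} (heS : e ∈ S) (he : e ∈ G.edgeSet) (ha : C e ≠ a) {v : V} (hv : v ∈ e) :
    MissingAt G (S.piecewise (fun _ => a) C) (C e) v := by
  intro f hf hvf
  by_cases hfS : f ∈ S
  · rw [S.piecewise_eq_of_mem _ _ hfS]
    exact ha.symm
  · rw [S.piecewise_eq_of_notMem _ _ hfS]
    exact hC ⟨hf, he, fun hfe => hfS (hfe ▸ heS), v, hvf, hv⟩

end Recoloring

section Kempe

variable {G : SimpleGraph V} {D : Sym2 V → ℕ}

/-- A Kempe change: swap `a` and `b` on the `(a, b)`-coloured components that meet `T`. -/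
lemma IsProperEdgeColoring.exists_kempe_swap (hD : IsProperEdgeColoring G D) (a b : ℕ)
    (T : Set V) (hT : ∀ v ∈ T, MissingAt G D b v) :
    ∃ D', IsProperEdgeColoring G D' ∧ (∀ e, D' e = D e ∨ D' e = Equiv.swap a b (D e)) ∧
      ∀ v ∈ T, MissingAt G D' a v := by
  classical
  let R : Set V := {y | ∃ τ ∈ T, Relation.ReflTransGen
    (fun x y => G.Adj x y ∧ (D s(x, y) = a ∨ D s(x, y) = b)) τ y}
  have hR : ∀ e ∈ G.edgeSet, (D e = a ∨ D e = b) → ∀ u ∈ e, u ∈ R → ∀ u' ∈ e, u' ∈ R := by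
    intro e he hab u hu huR u' hu'
    induction e using Sym2.ind with
    | _ x y =>
      have step : ∀ {x y}, G.Adj x y → (D s(x, y) = a ∨ D s(x, y) = b) → x ∈ R → y ∈ R :=
        fun hxy hxy' ⟨τ, hτ, hτx⟩ => ⟨τ, hτ, hτx.tail ⟨hxy, hxy'⟩⟩
      rw [Sym2.mem_iff] at hu hu'
      rcases hu with rfl | rfl <;> rcases hu' with rfl | rfl
      · exact huR
      · exact step he hab huR
      · exact step (G.adj_symm he) (Sym2.eq_swap ▸ hab) huR
      · exact huR
  let D' : Sym2 V → ℕ := fun e => if ∃ u ∈ e, u ∈ R then Equiv.swap a b (D e) else D e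
  have key : ∀ {e f}, EdgeAdj G e f → (∃ u ∈ e, u ∈ R) → ¬ (∃ u ∈ f, u ∈ R) →
      Equiv.swap a b (D e) ≠ D f := by
    rintro e f hef ⟨u, hue, huR⟩ hf
    have ⟨he, _, _, v, hve, hvf⟩ := hef
    by_cases hab : D e = a ∨ D e = b
    · exact absurd ⟨v, hvf, hR e he hab u hue huR v hve⟩ hf
    · rw [not_or] at hab
      rw [Equiv.swap_apply_of_ne_of_ne hab.1 hab.2]
      exact hD hef
  refine ⟨D', fun e f hef => ?_, fun e => ?_, fun v hv e he hve => ?_⟩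
  · by_cases he : ∃ u ∈ e, u ∈ R <;> by_cases hf : ∃ u ∈ f, u ∈ R <;>
      simp only [D', he, hf, if_true, if_false]
    · exact fun h => hD hef ((Equiv.swap a b).injective h)
    · exact key hef he hf
    · exact (key hef.symm hf he).symm
    · exact hD hef
  · by_cases he : ∃ u ∈ e, u ∈ R <;> simp [D', he]
  · have hvR : ∃ u ∈ e, u ∈ R := ⟨v, hve, v, hv, .refl⟩
    simp only [D', hvR, if_true, ne_eq, Equiv.swap_apply_eq_iff, Equiv.swap_apply_left]
    exact hT v hv e he hve

variable {D' : Sym2 V → ℕ} {a b : ℕ}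

lemma MissingAt.of_swap (hD' : ∀ e, D' e = D e ∨ D' e = Equiv.swap a b (D e)) {x : ℕ} {v : V}
    (h : MissingAt G D x v) (ha : x ≠ a) (hb : x ≠ b) : MissingAt G D' x v := fun e he hve hx => by
  rcases hD' e with h' | h' <;> rw [h'] at hx
  · exact h e he hve hx
  · rw [Equiv.swap_apply_eq_iff, Equiv.swap_apply_of_ne_of_ne ha hb] at hx
    exact h e he hve hx

lemma ColorsBelow.of_swap (hD' : ∀ e, D' e = D e ∨ D' e = Equiv.swap a b (D e)) {n : ℕ}
    (h : ColorsBelow G D n) (ha : a < n) (hb : b < n) : ColorsBelow G D' n := fun e he => by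
  rcases hD' e with h' | h' <;> rw [h']
  · exact h e he
  · have := h e he
    rw [Equiv.swap_apply_def]
    split_ifs <;> omega

end Kempe

def IsMatchingOn {ι : Type*} (f : ι → Sym2 V) (s : Set ι) : Prop :=
  ∀ i ∈ s, ∀ j ∈ s, ∀ v ∈ f i, v ∈ f j → i = j

section Matching

variable {ι : Type*} {f : ι → Sym2 V} {s : Set ι}

lemma IsMatchingOn.mono (h : IsMatchingOn f s) {s' : Set ι} (hs : s' ⊆ s) : IsMatchingOn f s' :=
  fun i hi j hj => h i (hs hi) j (hs hj)

lemma IsMatchingOn.injOn (h : IsMatchingOn f s) : Set.InjOn f s := fun i hi j hj hij =>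
  h i hi j hj _ (f i).out_fst_mem (hij ▸ (f i).out_fst_mem)

lemma IsMatchingOn.independentEdges_image (h : IsMatchingOn f s) : IndependentEdges (f '' s) := by
  rintro _ ⟨i, hi, rfl⟩ _ ⟨j, hj, rfl⟩ hne v hvi hvj
  exact hne (congrArg f (h i hi j hj v hvi hvj))

end Matching

section Extension

variable {G : SimpleGraph V} {k t : ℕ} {ι : Type*} {s : Finset ι} {f : ι → Sym2 V} {c : ι → ℕ}

lemma MatchingExtendable.exists_isProperEdgeColoring (h : MatchingExtendable G k t) :
    ∃ C, IsProperEdgeColoring G C ∧ ColorsBelow G C t := by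
  obtain ⟨C, hC, hCt, -⟩ := h (fun _ => none) ⟨fun _ h => (h rfl).elim, fun _ _ _ h => (h rfl).elim⟩
    (fun _ _ h => by simp at h) (fun _ h => (h rfl).elim) (by simp [Precolored])
  exact ⟨C, hC, hCt⟩

lemma MatchingExtendable.exists_extension (h : MatchingExtendable G k t)
    (hf : ∀ i ∈ s, f i ∈ G.edgeSet) (hfs : IsMatchingOn f s) (hc : ∀ i ∈ s, c i < t)
    (hs : s.card ≤ k) :
    ∃ C, IsProperEdgeColoring G C ∧ ColorsBelow G C t ∧ ∀ i ∈ s, C (f i) = c i := by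
  classical
  let ψ : Sym2 V → Option ℕ := fun e => if h : ∃ i ∈ s, f i = e then some (c h.choose) else none
  have hψ : ∀ i ∈ s, ψ (f i) = some (c i) := by
    intro i hi
    have hex : ∃ j ∈ s, f j = f i := ⟨i, hi, rfl⟩
    simp only [ψ, dif_pos hex, hfs.injOn hex.choose_spec.1 hi hex.choose_spec.2]
  have hprec : Precolored ψ = f '' s := by
    ext e
    by_cases hex : ∃ i ∈ s, f i = e <;> simp [Precolored, ψ, hex]
  have hψt : UsesColors ψ t := by
    intro e a he
    by_cases hex : ∃ i ∈ s, f i = e <;> simp only [ψ, hex, dif_pos, dif_neg, not_false_eq_true,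
      reduceCtorEq, Option.some.injEq] at he
    exact he ▸ hc _ hex.choose_spec.1
  have hind : IndependentEdges (Precolored ψ) := hprec ▸ hfs.independentEdges_image
  obtain ⟨C, hC, hCt, hCψ⟩ := h ψ
    (.of_independentEdges (fun e he => by
      obtain ⟨i, hi, rfl⟩ : e ∈ f '' s := hprec ▸ he
      exact hf i hi) hind)
    hψt hind (hprec ▸ (Set.ncard_image_le s.finite_toSet).trans (Set.ncard_coe_finset s ▸ hs))
  exact ⟨C, hC, hCt, fun i hi => hCψ _ _ (hψ i hi)⟩

/-- Extend, then recolour the edges `f i`, `i ∈ R`, with the new colour `t`. -/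
lemma MatchingExtendable.exists_coloring_freeing (h : MatchingExtendable G k t) (R : Set ι)
    (hf : ∀ i ∈ s, f i ∈ G.edgeSet) (hfs : IsMatchingOn f s) (hc : ∀ i ∈ s, c i < t)
    (hs : s.card ≤ k) :
    ∃ D, IsProperEdgeColoring G D ∧ ColorsBelow G D (t + 1) ∧ (∀ i ∈ s, i ∉ R → D (f i) = c i) ∧
      (∀ i ∈ s, i ∈ R → ∀ v ∈ f i, MissingAt G D (c i) v) ∧
      ∀ v, (∀ i ∈ s, i ∈ R → v ∉ f i) → MissingAt G D t v := by
  classical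
  obtain ⟨C, hC, hCt, hCf⟩ := h.exists_extension hf hfs hc hs
  let S := f '' {i | i ∈ s ∧ i ∈ R}
  have hS : IndependentEdges S := (hfs.mono fun i hi => hi.1).independentEdges_image
  have hfresh : ∀ v, MissingAt G C t v := fun v e he _ => (hCt e he).ne
  refine ⟨S.piecewise (fun _ => t) C, hC.piecewise_const hS fun _ _ v _ => hfresh v,
    ColorsBelow.piecewise_const (fun e he => (hCt e he).trans (Nat.lt_succ_self t))
      (Nat.lt_succ_self t), fun i hi hiR => ?_, fun i hi hiR v hv => ?_, fun v hv => ?_⟩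
  · rw [S.piecewise_eq_of_notMem _ _ fun ⟨j, ⟨hj, hjR⟩, hji⟩ => hiR (hfs.injOn hj hi hji ▸ hjR)]
    exact hCf i hi
  · have := hC.missingAt_piecewise_const (S := S) ⟨i, ⟨hi, hiR⟩, rfl⟩ (hf i hi)
      ((hCf i hi).trans_lt (hc i hi)).ne hv
    rwa [hCf i hi] at this
  · exact (hfresh v).piecewise_of_notMem (by rintro _ ⟨i, ⟨hi, hiR⟩, rfl⟩; exact hv i hi hiR)

/-- One edge too many for `h`: leave out the colour class of `c i₀`, apply
`exists_coloring_freeing`, then free that colour at the ends of the omitted edges by a Kempe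
change with the new colour `t` and put it back. -/
lemma MatchingExtendable.exists_coloring_of_card_le_succ (h : MatchingExtendable G k t)
    (R : Set ι) (hf : ∀ i ∈ s, f i ∈ G.edgeSet) (hfs : IsMatchingOn f s)
    (hc : ∀ i ∈ s, c i < t) (hs : s.card ≤ k + 1) {i₀ : ι} (hi₀ : i₀ ∈ s) :
    ∃ D, IsProperEdgeColoring G D ∧ ColorsBelow G D (t + 1) ∧ (∀ i ∈ s, i ∉ R → D (f i) = c i) ∧
      ∀ i ∈ s, i ∈ R → ∀ v ∈ f i, MissingAt G D (c i) v := by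
  classical
  set b := c i₀
  have hbt : b < t := hc i₀ hi₀
  have hkept : (s.filter (c · ≠ b)).card ≤ k := by
    have := Finset.card_lt_card ((Finset.filter_ssubset (p := (c · ≠ b))).2 ⟨i₀, hi₀, by simp [b]⟩)
    omega
  obtain ⟨D₀, hD₀, hD₀t, hD₀f, hD₀R, hD₀free⟩ := h.exists_coloring_freeing R
    (fun i hi => hf i (Finset.mem_filter.1 hi).1) (hfs.mono fun i hi => (Finset.mem_filter.1 hi).1)
    (fun i hi => hc i (Finset.mem_filter.1 hi).1) hkept
  let T : Set V := {v | ∃ i ∈ s, c i = b ∧ v ∈ f i}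
  obtain ⟨D₁, hD₁, hD₁D₀, hD₁T⟩ := hD₀.exists_kempe_swap b t T <| by
    rintro v ⟨i, hi, hib, hvi⟩
    refine hD₀free v fun j hj _ hvj => ?_
    obtain rfl := hfs i hi j (Finset.mem_filter.1 hj).1 v hvi hvj
    exact (Finset.mem_filter.1 hj).2 hib
  let S := f '' {i | i ∈ s ∧ i ∉ R ∧ c i = b}
  have hS : IndependentEdges S := (hfs.mono fun i hi => hi.1).independentEdges_image
  refine ⟨S.piecewise (fun _ => b) D₁, hD₁.piecewise_const hS ?_,
    (hD₀t.of_swap hD₁D₀ (by omega) (by omega)).piecewise_const (by omega),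
    fun i hi hiR => ?_, fun i hi hiR v hv => ?_⟩
  · rintro _ ⟨i, ⟨hi, -, hib⟩, rfl⟩ v hv
    exact hD₁T v ⟨i, hi, hib, hv⟩
  · by_cases hib : c i = b
    · rw [S.piecewise_eq_of_mem _ _ ⟨i, ⟨hi, hiR, hib⟩, rfl⟩, hib]
    · have hD₀i := hD₀f i (Finset.mem_filter.2 ⟨hi, hib⟩) hiR
      rw [S.piecewise_eq_of_notMem _ _ fun ⟨j, ⟨hj, _, hjb⟩, hji⟩ =>
        hib (hfs.injOn hj hi hji ▸ hjb)]
      rcases hD₁D₀ (f i) with h₁ | h₁ <;> rw [h₁, hD₀i]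
      exact Equiv.swap_apply_of_ne_of_ne hib (hc i hi).ne
  · refine MissingAt.piecewise_of_notMem ?_ fun _ ⟨j, ⟨hj, hjR, _⟩, hji⟩ hvj =>
      hjR (hfs i hi j hj v hv (hji ▸ hvj) ▸ hiR)
    by_cases hib : c i = b
    · exact hib ▸ hD₁T v ⟨i, hi, hib, hv⟩
    · exact (hD₀R i (Finset.mem_filter.2 ⟨hi, hib⟩) hiR v hv).of_swap hD₁D₀ hib (hc i hi).ne

end Extension

section TriangleFree

variable [Fintype V] [DecidableEq V] {G : SimpleGraph V} [DecidableRel G.Adj]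

/-- In a triangle-free graph an edge contains at most one neighbour of `x`. -/
lemma SimpleGraph.CliqueFree.card_neighborFinset_inter_le (htf : G.CliqueFree 3) (x : V)
    {F : Finset (Sym2 V)} (hF : ∀ e ∈ F, e ∈ G.edgeSet) :
    (G.neighborFinset x ∩ ({v | ∃ e ∈ F, v ∈ e} : Finset V)).card ≤ F.card := by
  refine Finset.card_le_card_of_forall_subsingleton (· ∈ ·) (fun v hv => ?_)
    fun e he y hy z hz => ?_
  · simpa using (Finset.mem_inter.1 hv).2
  · by_contra hyz
    have hxy := (G.mem_neighborFinset x y).1 (Finset.mem_inter.1 hy.1).1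
    have hxz := (G.mem_neighborFinset x z).1 (Finset.mem_inter.1 hz.1).1
    have hyz' : G.Adj y z := by
      rw [← G.mem_edgeSet, ← (Sym2.mem_and_mem_iff hyz).1 ⟨hy.2, hz.2⟩]
      exact hF e he
    exact isIndepSet_neighborSet_of_triangleFree G htf x hxy hxz hyz hyz'

/-- Hall's condition for the sets `N(j) \ (U ∪ B)`: if `s` contains two adjacent vertices, their
neighbourhoods are disjoint (no triangles) and already large enough together; otherwise `s`
avoids the neighbourhood of any of its vertices. -/
lemma SimpleGraph.IsRegularOfDegree.card_le_card_biUnion_sdiff {Δ r : ℕ}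
    (hreg : G.IsRegularOfDegree Δ) (htf : G.CliqueFree 3) {U B : Finset V}
    (hB : ∀ x, (G.neighborFinset x ∩ B).card ≤ r) (hr : U.card + r ≤ Δ) (s : Finset U) :
    s.card ≤ (s.biUnion fun j => G.neighborFinset j \ (U ∪ B)).card := by
  set N : V → Finset V := fun x => G.neighborFinset x \ (U ∪ B)
  show s.card ≤ (s.biUnion fun j => N j).card
  have hN : ∀ x, Δ ≤ (N x).card + (G.neighborFinset x ∩ U).card + r := fun x => by
    have h₁ := Finset.card_sdiff_add_card_inter (G.neighborFinset x) (U ∪ B)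
    have h₂ := Finset.card_union_le (G.neighborFinset x ∩ U) (G.neighborFinset x ∩ B)
    rw [← Finset.inter_union_distrib_left] at h₂
    rw [card_neighborFinset_eq_degree, hreg x] at h₁
    linarith [hB x]
  rcases s.eq_empty_or_nonempty with rfl | ⟨j, hj⟩
  · simp
  have hs : s.card ≤ U.card := by simpa using s.card_le_univ
  have hNj := Finset.card_le_card (Finset.subset_biUnion_of_mem (fun j : U => N j) hj)
  by_cases hadj : ∃ q ∈ s, G.Adj j q
  · obtain ⟨q, hq, hjq⟩ := hadj
    have hdisj : Disjoint (G.neighborFinset j) (G.neighborFinset q) :=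
      Finset.disjoint_left.2 fun z hjz hqz => isIndepSet_neighborSet_of_triangleFree G htf z
        ((G.mem_neighborFinset j z).1 hjz).symm ((G.mem_neighborFinset q z).1 hqz).symm
        (G.ne_of_adj hjq) hjq
    have h₁ : (N j).card + (N q).card ≤ (s.biUnion fun j => N j).card := by
      rw [← Finset.card_union_of_disjoint (hdisj.mono Finset.sdiff_subset Finset.sdiff_subset)]
      exact Finset.card_le_card (Finset.union_subset
        (Finset.subset_biUnion_of_mem (fun j : U => N j) hj)
        (Finset.subset_biUnion_of_mem (fun j : U => N j) hq))
    have h₂ : (G.neighborFinset j ∩ U).card + (G.neighborFinset q ∩ U).card ≤ U.card := by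
      rw [← Finset.card_union_of_disjoint
        (hdisj.mono Finset.inter_subset_left Finset.inter_subset_left)]
      exact Finset.card_le_card (Finset.union_subset Finset.inter_subset_right
        Finset.inter_subset_right)
    linarith [hN j, hN q]
  · push Not at hadj
    have h₁ : (s.image Subtype.val) ⊆ U \ (G.neighborFinset j ∩ U) := fun v hv => by
      obtain ⟨q, hq, rfl⟩ := Finset.mem_image.1 hv
      exact Finset.mem_sdiff.2 ⟨q.2, fun h => hadj q hq
        ((G.mem_neighborFinset j q).1 (Finset.mem_inter.1 h).1)⟩
    have h₂ := Finset.card_le_card h₁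
    rw [Finset.card_image_of_injective _ Subtype.val_injective,
      Finset.card_sdiff_of_subset Finset.inter_subset_right] at h₂
    have h₃ := Finset.card_le_card (Finset.inter_subset_right (s₁ := G.neighborFinset j) (s₂ := U))
    have := hN j
    omega

lemma SimpleGraph.IsRegularOfDegree.exists_injOn_adj_notMem {Δ r : ℕ}
    (hreg : G.IsRegularOfDegree Δ) (htf : G.CliqueFree 3) {U B : Finset V}
    (hB : ∀ x, (G.neighborFinset x ∩ B).card ≤ r) (hr : U.card + r ≤ Δ) :
    ∃ w : V → V, Set.InjOn w U ∧ ∀ j ∈ U, G.Adj j (w j) ∧ w j ∉ U ∧ w j ∉ B := by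
  obtain ⟨g, hg, hgN⟩ := (Finset.all_card_le_biUnion_card_iff_exists_injective _).1
    (hreg.card_le_card_biUnion_sdiff htf hB hr)
  refine ⟨fun v => if h : v ∈ U then g ⟨v, h⟩ else v, fun p hp q hq hpq => ?_, fun j hj => ?_⟩
  · simp only [Finset.mem_coe] at hp hq
    exact congrArg Subtype.val (hg (by simpa [hp, hq] using hpq))
  · have := hgN ⟨j, hj⟩
    simp only [Finset.mem_sdiff, Finset.mem_union, not_or, mem_neighborFinset] at this
    simpa [hj] using this

lemma SimpleGraph.IsRegularOfDegree.exists_pendant_neighbors {Δ : ℕ} (hreg : G.IsRegularOfDegree Δ)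
    (htf : G.CliqueFree 3) {U : Finset V} {F : Finset (Sym2 V)} (hF : ∀ e ∈ F, e ∈ G.edgeSet)
    (hcard : U.card + F.card ≤ Δ) :
    ∃ w : V → V, Set.InjOn w U ∧ ∀ j ∈ U, G.Adj j (w j) ∧ w j ∉ U ∧ ∀ e ∈ F, w j ∉ e := by
  obtain ⟨w, hw, hwU⟩ := hreg.exists_injOn_adj_notMem htf
    (fun x => htf.card_neighborFinset_inter_le x hF) hcard
  refine ⟨w, hw, fun j hj => ⟨(hwU j hj).1, (hwU j hj).2.1, fun e he hwe => (hwU j hj).2.2 ?_⟩⟩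
  simpa using ⟨e, he, hwe⟩

end TriangleFree

section ColorPermutation

variable {W : Type*} {H : SimpleGraph W} {φ : Sym2 W → Option ℕ}

lemma exists_unused_color [Finite W] {n : ℕ} (hcard : (Precolored φ).ncard ≤ n) :
    ∃ c < n + 1, ∀ e, φ e ≠ some c := by
  classical
  have hfin := (Precolored φ).toFinite
  obtain ⟨c, hc, hcφ⟩ := Finset.exists_mem_notMem_of_card_lt_card
    (s := hfin.toFinset.image fun e => (φ e).getD 0) (t := Finset.range (n + 1)) <| by
      have := Set.ncard_eq_toFinset_card _ hfin
      rw [Finset.card_range]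
      exact Finset.card_image_le.trans_lt (by omega)
  refine ⟨c, Finset.mem_range.1 hc, fun e he => hcφ (Finset.mem_image.2 ⟨e, ?_, by simp [he]⟩)⟩
  simp [Precolored, he]

/-- Exchanging an unused colour with `n` reduces the extension problem to precolourings from `n`
colours. -/
lemma extendable_of_forall_usesColors [Finite W] {n : ℕ} (hφ : IsPartialProperEdgeColoring H φ)
    (huse : UsesColors φ (n + 1)) (hcard : (Precolored φ).ncard ≤ n)
    (h : ∀ ψ, IsPartialProperEdgeColoring H ψ → UsesColors ψ n → Precolored ψ = Precolored φ →
      Extendable H ψ (n + 1)) :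
    Extendable H φ (n + 1) := by
  obtain ⟨c, hc, hcφ⟩ := exists_unused_color hcard
  let σ := Equiv.swap c n
  have hσ : ∀ a < n + 1, σ a < n + 1 := fun a ha => by
    simp only [σ, Equiv.swap_apply_def]
    split_ifs <;> omega
  have hσφ : UsesColors (fun e => (φ e).map σ) n := fun e a' ha' => by
    obtain ⟨a, ha, rfl⟩ := Option.map_eq_some_iff.1 ha'
    have hσa : σ a ≠ n := fun h => hcφ e (by simpa [σ, ha] using Equiv.swap_apply_eq_iff.1 h)
    have := hσ a (huse e a ha)
    omega
  obtain ⟨C, hC, hCn, hCφ⟩ := h (fun e => (φ e).map σ) ⟨fun e he => hφ.1 e (by simpa using he),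
      fun e f hef he hσef => hφ.2 hef (by simpa using he) (Option.map_injective σ.injective hσef)⟩
    hσφ (by ext e; simp [Precolored])
  refine ⟨fun e => σ (C e), fun e f hef hσef => hC hef (σ.injective hσef),
    fun e he => hσ _ (hCn e he), fun e a hea => ?_⟩
  show σ (C e) = a
  rw [hCφ e (σ a) (by simp [hea]), Equiv.swap_apply_self]

end ColorPermutation

section Prism

variable {G : SimpleGraph V}

def copyEdge (i : Fin 2) (e : Sym2 V) : Sym2 (V × Fin 2) := e.map (·, i)

def rungEdge (v : V) : Sym2 (V × Fin 2) := s((v, 0), (v, 1))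

@[simp]
lemma mk_mem_copyEdge {x : V} {i j : Fin 2} {e : Sym2 V} :
    (x, j) ∈ copyEdge i e ↔ x ∈ e ∧ j = i := by
  simp [copyEdge, Sym2.mem_map, eq_comm]

@[simp]
lemma mk_mem_rungEdge {x v : V} {j : Fin 2} : (x, j) ∈ rungEdge v ↔ x = v := by
  fin_cases j <;> simp [rungEdge]

@[simp]
lemma copyEdge_mk (i : Fin 2) (u v : V) : copyEdge i s(u, v) = s((u, i), (v, i)) := rfl

lemma copyEdge_injective (i : Fin 2) : Function.Injective (copyEdge (V := V) i) :=
  Sym2.map.injective fun _ _ h => (Prod.mk.inj h).1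

lemma copyEdge_ne_copyEdge {i j : Fin 2} (hij : i ≠ j) (e f : Sym2 V) :
    copyEdge i e ≠ copyEdge j f :=
  fun h => hij (mk_mem_copyEdge.1
    (h ▸ mk_mem_copyEdge.2 ⟨e.out_fst_mem, rfl⟩ : (e.out.1, i) ∈ copyEdge j f)).2

lemma copyEdge_ne_rungEdge (i : Fin 2) (e : Sym2 V) (v : V) : copyEdge i e ≠ rungEdge v := by
  intro h
  have h₀ := mk_mem_copyEdge.1 (h ▸ mk_mem_rungEdge.2 rfl : (v, (0 : Fin 2)) ∈ copyEdge i e)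
  have h₁ := mk_mem_copyEdge.1 (h ▸ mk_mem_rungEdge.2 rfl : (v, (1 : Fin 2)) ∈ copyEdge i e)
  exact absurd (h₀.2.trans h₁.2.symm) (by decide)

lemma rungEdge_injective : Function.Injective (rungEdge (V := V)) := fun u v h =>
  mk_mem_rungEdge.1 (h ▸ mk_mem_rungEdge.2 rfl : (u, (0 : Fin 2)) ∈ rungEdge v)

@[simp]
lemma copyEdge_mem_edgeSet {i : Fin 2} {e : Sym2 V} :
    copyEdge i e ∈ (G □ ⊤).edgeSet ↔ e ∈ G.edgeSet := by
  induction e using Sym2.ind with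
  | _ u v => simp [boxProd_adj]

@[simp]
lemma rungEdge_mem_edgeSet (v : V) : rungEdge v ∈ (G □ ⊤).edgeSet := by
  simp [rungEdge, boxProd_adj]

lemma boxProd_top_edge_cases {e : Sym2 (V × Fin 2)} (he : e ∈ (G □ ⊤).edgeSet) :
    (∃ i e', e' ∈ G.edgeSet ∧ e = copyEdge i e') ∨ ∃ v, e = rungEdge v := by
  induction e using Sym2.ind with
  | _ x y =>
    obtain ⟨u, i⟩ := x
    obtain ⟨v, j⟩ := y
    rcases (G □ ⊤).mem_edgeSet.1 he with ⟨huv, hij : i = j⟩ | ⟨hij, huv : u = v⟩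
    · exact .inl ⟨i, s(u, v), huv, by simp [hij]⟩
    · subst huv
      refine .inr ⟨u, ?_⟩
      fin_cases i <;> fin_cases j <;> simp_all [rungEdge, Sym2.eq_swap]

open Classical in
/-- The test `a.1 = b.1` only makes the function symmetric: every edge between the two copies is
a rung. -/
noncomputable def prismColoring (D : Fin 2 → Sym2 V → ℕ) (M : V → ℕ) : Sym2 (V × Fin 2) → ℕ :=
  Sym2.lift ⟨fun a b => if a.2 = b.2 then D a.2 s(a.1, b.1) else if a.1 = b.1 then M a.1 else 0,
    fun a b => by
      by_cases h₂ : a.2 = b.2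
      · simp [h₂, Sym2.eq_swap]
      · by_cases h₁ : a.1 = b.1
        · simp [h₁, h₂, Ne.symm h₂]
        · simp [h₁, h₂, Ne.symm h₁, Ne.symm h₂]⟩

@[simp]
lemma prismColoring_copyEdge (D : Fin 2 → Sym2 V → ℕ) (M : V → ℕ) (i : Fin 2) (e : Sym2 V) :
    prismColoring D M (copyEdge i e) = D i e := by
  induction e using Sym2.ind with
  | _ u v => simp [prismColoring]

@[simp]
lemma prismColoring_rungEdge (D : Fin 2 → Sym2 V → ℕ) (M : V → ℕ) (v : V) :
    prismColoring D M (rungEdge v) = M v := by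
  simp [prismColoring, rungEdge]

lemma extendable_boxProd_top {φ : Sym2 (V × Fin 2) → Option ℕ} {n : ℕ}
    (hφ : ∀ e, φ e ≠ none → e ∈ (G □ ⊤).edgeSet) (D : Fin 2 → Sym2 V → ℕ) (M : V → ℕ)
    (hD : ∀ i, IsProperEdgeColoring G (D i)) (hDn : ∀ i, ColorsBelow G (D i) n)
    (hM : ∀ v, M v < n) (hDM : ∀ i v, MissingAt G (D i) (M v) v)
    (hDφ : ∀ i, ExtendsColoring (D i) fun e => φ (copyEdge i e))
    (hMφ : ∀ v a, φ (rungEdge v) = some a → M v = a) :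
    Extendable (G □ ⊤) φ n := by
  refine ⟨prismColoring D M, fun e f hef => ?_, fun e he => ?_, fun e a hea => ?_⟩
  · obtain ⟨he, hf, hne, ⟨x, j⟩, hxe, hxf⟩ := hef
    rcases boxProd_top_edge_cases he with ⟨i, e, heG, rfl⟩ | ⟨v, rfl⟩ <;>
      rcases boxProd_top_edge_cases hf with ⟨i', f, hfG, rfl⟩ | ⟨v', rfl⟩ <;>
      simp only [mk_mem_copyEdge, mk_mem_rungEdge] at hxe hxf <;>
      simp only [prismColoring_copyEdge, prismColoring_rungEdge]
    · obtain ⟨hxe, rfl⟩ := hxe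
      obtain ⟨hxf, rfl⟩ := hxf
      exact hD j ⟨heG, hfG, fun h => hne (h ▸ rfl), x, hxe, hxf⟩
    · obtain ⟨hxe, rfl⟩ := hxe
      subst hxf
      exact hDM j x e heG hxe
    · obtain ⟨hxf, rfl⟩ := hxf
      subst hxe
      exact (hDM j x f hfG hxf).symm
    · exact absurd (hxe ▸ hxf ▸ rfl) hne
  · rcases boxProd_top_edge_cases he with ⟨i, e, heG, rfl⟩ | ⟨v, rfl⟩
    · simpa using hDn i e heG
    · simpa using hM v
  · have he := hφ e (by simp [hea])
    rcases boxProd_top_edge_cases he with ⟨i, e, -, rfl⟩ | ⟨v, rfl⟩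
    · simpa using hDφ i e a hea
    · simpa using hMφ v a hea

end Prism

section Pendant

variable {φ : Sym2 (V × Fin 2) → Option ℕ}

/-- Index `inl e` stands for the edge `e` of a copy, index `inr j` for the rung at `j`, moved to
the pendant edge `s(j, w j)` of `G`. -/
def pendantEdge (w : V → V) : Sym2 V ⊕ V → Sym2 V := Sum.elim id fun j => s(j, w j)

def pendantColor (φ : Sym2 (V × Fin 2) → Option ℕ) (i : Fin 2) : Sym2 V ⊕ V → ℕ :=
  Sum.elim (fun e => (φ (copyEdge i e)).getD 0) fun v => (φ (rungEdge v)).getD 0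

lemma pendantColor_inr {i : Fin 2} {v : V} {a : ℕ} (h : φ (rungEdge v) = some a) :
    pendantColor φ i (.inr v) = a := by
  simp [pendantColor, h]

lemma pendantColor_inl {i : Fin 2} {e : Sym2 V} {a : ℕ} (h : φ (copyEdge i e) = some a) :
    pendantColor φ i (.inl e) = a := by
  simp [pendantColor, h]

end Pendant

section PrismPrecoloring

variable [Fintype V] {G : SimpleGraph V} (φ : Sym2 (V × Fin 2) → Option ℕ)

def rungSupport : Finset V := {v | φ (rungEdge v) ≠ none}

def copySupport (i : Fin 2) : Finset (Sym2 V) := {e | φ (copyEdge i e) ≠ none}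

@[simp]
lemma mem_rungSupport {v : V} : v ∈ rungSupport φ ↔ φ (rungEdge v) ≠ none := by
  simp [rungSupport]

@[simp]
lemma mem_copySupport {i : Fin 2} {e : Sym2 V} : e ∈ copySupport φ i ↔ φ (copyEdge i e) ≠ none := by
  simp [copySupport]

lemma card_copySupport_add_card_rungSupport_le :
    (copySupport φ 0).card + (copySupport φ 1).card + (rungSupport φ).card ≤
      (Precolored φ).ncard := by
  let g := Sum.elim (copyEdge (V := V) 0) (Sum.elim (copyEdge 1) rungEdge)
  have hg : Function.Injective g :=
    (copyEdge_injective 0).sumElim ((copyEdge_injective 1).sumElim rungEdge_injective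
      fun e v => copyEdge_ne_rungEdge 1 e v) fun e x => by
        cases x with
        | inl f => exact copyEdge_ne_copyEdge (by decide) e f
        | inr v => exact copyEdge_ne_rungEdge 0 e v
  have := Set.ncard_le_ncard_of_injOn g (s := ((copySupport φ 0).disjSum
    ((copySupport φ 1).disjSum (rungSupport φ)) : Set _)) (t := Precolored φ)
    (fun x hx => ?_) hg.injOn (Set.toFinite _)
  · simpa [Finset.card_disjSum, add_assoc] using this
  · rcases x with e | e | v <;> simpa [copySupport, rungSupport, g, Precolored] using hx

variable {φ}

lemma pendantEdge_mem_edgeSet (hφ : ∀ e, φ e ≠ none → e ∈ (G □ ⊤).edgeSet) {w : V → V}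
    (hw : ∀ j ∈ rungSupport φ, G.Adj j (w j)) (i : Fin 2) :
    ∀ x ∈ (copySupport φ i).disjSum (rungSupport φ), pendantEdge w x ∈ G.edgeSet := by
  rintro (e | j) hx <;> simp only [Finset.inl_mem_disjSum, Finset.inr_mem_disjSum] at hx
  · simpa [pendantEdge] using hφ _ ((mem_copySupport φ).1 hx)
  · exact hw j hx

lemma isMatchingOn_pendantEdge (hind : IndependentEdges (Precolored φ)) {w : V → V}
    (hwinj : Set.InjOn w (rungSupport φ)) (hwU : ∀ j ∈ rungSupport φ, w j ∉ rungSupport φ)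
    {i : Fin 2} (hwE : ∀ j ∈ rungSupport φ, ∀ e ∈ copySupport φ i, w j ∉ e) :
    IsMatchingOn (pendantEdge w) ((copySupport φ i).disjSum (rungSupport φ) : Set _) := by
  have hrung : ∀ j ∈ rungSupport φ, ∀ j' ∈ rungSupport φ, j ∈ s(j', w j') → j = j' :=
    fun j hj j' hj' hjj' => (Sym2.mem_iff.1 hjj').resolve_right fun h => hwU j' hj' (h ▸ hj)
  rintro (e | j) hx (f | j') hy v hvx hvy <;>
    simp only [Finset.mem_coe, Finset.inl_mem_disjSum, Finset.inr_mem_disjSum, mem_copySupport,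
      mem_rungSupport, pendantEdge, Sum.elim_inl, Sum.elim_inr, id] at hx hy hvx hvy
  · exact congrArg _ (by_contra fun hef => hind _ hx _ hy
      (fun h => hef (copyEdge_injective i h)) (v, i) (by simpa using hvx) (by simpa using hvy))
  · obtain rfl | rfl := Sym2.mem_iff.1 hvy
    · exact (hind _ hx _ hy (copyEdge_ne_rungEdge i e v) (v, i) (by simpa using hvx) (by simp)).elim
    · exact (hwE j' ((mem_rungSupport φ).2 hy) e ((mem_copySupport φ).2 hx) hvx).elim
  · obtain rfl | rfl := Sym2.mem_iff.1 hvx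
    · exact (hind _ hy _ hx (copyEdge_ne_rungEdge i f v) (v, i) (by simpa using hvy) (by simp)).elim
    · exact (hwE j ((mem_rungSupport φ).2 hx) f ((mem_copySupport φ).2 hy) hvy).elim
  · rw [← mem_rungSupport] at hx hy
    refine congrArg _ ?_
    obtain rfl | rfl := Sym2.mem_iff.1 hvx
    · exact hrung _ hx j' hy hvy
    · obtain rfl | h := Sym2.mem_iff.1 hvy
      · exact (hrung _ hy j hx hvx).symm
      · exact hwinj hx hy h

lemma pendantColor_lt {t : ℕ} (huse : UsesColors φ t) (i : Fin 2) :
    ∀ x ∈ (copySupport φ i).disjSum (rungSupport φ), pendantColor φ i x < t := by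
  rintro (e | j) hx <;>
    simp only [Finset.inl_mem_disjSum, Finset.inr_mem_disjSum, mem_copySupport,
      mem_rungSupport] at hx <;>
    obtain ⟨a, ha⟩ := Option.ne_none_iff_exists'.1 hx <;>
    simpa [pendantColor, ha] using huse _ a ha

end PrismPrecoloring

section PrismExtension

variable [Fintype V] {G : SimpleGraph V} {φ : Sym2 (V × Fin 2) → Option ℕ} {k t : ℕ} {w : V → V}

/-- Both copies are coloured separately; a vertex on a pendant edge gets the colour freed there as
its rung colour, and every other vertex the new colour `t`. -/
lemma extendable_of_forall_card_le (h : MatchingExtendable G k t)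
    (hφ : ∀ e, φ e ≠ none → e ∈ (G □ ⊤).edgeSet)
    (hf : ∀ i, ∀ x ∈ (copySupport φ i).disjSum (rungSupport φ), pendantEdge w x ∈ G.edgeSet)
    (hfs : ∀ i, IsMatchingOn (pendantEdge w) ((copySupport φ i).disjSum (rungSupport φ) : Set _))
    (hc : ∀ i, ∀ x ∈ (copySupport φ i).disjSum (rungSupport φ), pendantColor φ i x < t)
    (hcard : ∀ i, ((copySupport φ i).disjSum (rungSupport φ)).card ≤ k) :
    Extendable (G □ ⊤) φ (t + 1) := by
  classical
  choose D hD hDt hDf hDR hDfree using fun i =>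
    h.exists_coloring_freeing (Set.range Sum.inr) (hf i) (hfs i) (hc i) (hcard i)
  let M : V → ℕ := fun v =>
    if hv : ∃ j ∈ rungSupport φ, v ∈ s(j, w j) then (φ (rungEdge hv.choose)).getD 0 else t
  have hM : ∀ v (hv : ∃ j ∈ rungSupport φ, v ∈ s(j, w j)) i,
      M v = pendantColor φ i (.inr hv.choose) := fun v hv i => by
    simp only [M, dif_pos hv, pendantColor, Sum.elim_inr]
  refine extendable_boxProd_top hφ D M hD hDt (fun v => ?_) (fun i v => ?_)
    (fun i e a he => ?_) fun v a hv => ?_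
  · by_cases hv : ∃ j ∈ rungSupport φ, v ∈ s(j, w j)
    · rw [hM v hv 0]
      exact (hc 0 _ (Finset.inr_mem_disjSum.2 hv.choose_spec.1)).trans (Nat.lt_succ_self t)
    · simp only [M, dif_neg hv]
      omega
  · by_cases hv : ∃ j ∈ rungSupport φ, v ∈ s(j, w j)
    · rw [hM v hv i]
      exact hDR i _ (Finset.inr_mem_disjSum.2 hv.choose_spec.1) ⟨_, rfl⟩ v hv.choose_spec.2
    · simp only [M, hv, dite_false]
      refine hDfree i v fun x hx ⟨j, hj⟩ hvx => hv ⟨j, ?_, ?_⟩ <;> subst hj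
      exacts [Finset.inr_mem_disjSum.1 hx, hvx]
  · have hx : .inl e ∈ (copySupport φ i).disjSum (rungSupport φ) := by simp [he]
    simpa [pendantEdge, pendantColor_inl he] using hDf i _ hx (by simp)
  · have hvU : v ∈ rungSupport φ := by simp [hv]
    have hex : ∃ j ∈ rungSupport φ, v ∈ s(j, w j) := ⟨v, hvU, Sym2.mem_mk_left _ _⟩
    have hchoose : hex.choose = v := Sum.inr.inj <| hfs 0 _
      (Finset.inr_mem_disjSum.2 hex.choose_spec.1) _ (Finset.inr_mem_disjSum.2 hvU) v
      hex.choose_spec.2 (Sym2.mem_mk_left _ _)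
    rw [hM v hex 0, hchoose, pendantColor_inr hv]

/-- When only copy `i₀` has precoloured edges, a single colouring of `G` serves both copies, and a
rung that is not precoloured gets any colour missing at its end. -/
lemma extendable_of_copySupport_eq_empty [DecidableRel G.Adj] (h : MatchingExtendable G k t)
    (hφ : ∀ e, φ e ≠ none → e ∈ (G □ ⊤).edgeSet) (hdeg : ∀ v, G.degree v ≤ t) {i₀ : Fin 2}
    (hf : ∀ x ∈ (copySupport φ i₀).disjSum (rungSupport φ), pendantEdge w x ∈ G.edgeSet)
    (hfs : IsMatchingOn (pendantEdge w) ((copySupport φ i₀).disjSum (rungSupport φ) : Set _))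
    (hc : ∀ x ∈ (copySupport φ i₀).disjSum (rungSupport φ), pendantColor φ i₀ x < t)
    (hcard : ((copySupport φ i₀).disjSum (rungSupport φ)).card ≤ k + 1)
    (hne : ((copySupport φ i₀).disjSum (rungSupport φ)).Nonempty)
    (hempty : ∀ i ≠ i₀, copySupport φ i = ∅) :
    Extendable (G □ ⊤) φ (t + 1) := by
  classical
  obtain ⟨x₀, hx₀⟩ := hne
  obtain ⟨D, hD, hDt, hDf, hDR⟩ :=
    h.exists_coloring_of_card_le_succ (Set.range Sum.inr) hf hfs hc hcard hx₀
  choose M' hM't hM' using fun v => exists_missingAt D (hdeg v)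
  let M : V → ℕ := fun v => if φ (rungEdge v) = none then M' v else pendantColor φ i₀ (.inr v)
  refine extendable_boxProd_top hφ (fun _ => D) M (fun _ => hD) (fun _ => hDt) (fun v => ?_)
    (fun _ v => ?_) (fun i e a he => ?_) fun v a hv => ?_
  · by_cases hv : φ (rungEdge v) = none
    · simpa [M, hv] using hM't v
    · simp only [M, if_neg hv]
      exact (hc _ (Finset.inr_mem_disjSum.2 ((mem_rungSupport φ).2 hv))).trans (Nat.lt_succ_self t)
  · by_cases hv : φ (rungEdge v) = none
    · simpa [M, hv] using hM' v
    · simp only [M, if_neg hv]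
      exact hDR _ (Finset.inr_mem_disjSum.2 ((mem_rungSupport φ).2 hv)) ⟨v, rfl⟩ v
        (Sym2.mem_mk_left _ _)
  · have heS : e ∈ copySupport φ i := by simp [he]
    obtain rfl : i = i₀ := by
      by_contra hi
      simp [hempty i hi] at heS
    simpa [pendantEdge, pendantColor_inl he] using hDf _ (Finset.inl_mem_disjSum.2 heS) (by simp)
  · simp only [M, hv, reduceCtorEq, if_false]
    exact pendantColor_inr hv

end PrismExtension

theorem extendable_boxProd_top_of_usesColors [Fintype V] {G : SimpleGraph V} [DecidableRel G.Adj]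
    {Δ k t : ℕ} (hreg : G.IsRegularOfDegree Δ) (htf : G.CliqueFree 3) (hk : k < Δ)
    (h : MatchingExtendable G k t) (hdeg : ∀ v, G.degree v ≤ t)
    {φ : Sym2 (V × Fin 2) → Option ℕ} (hφ : IsPartialProperEdgeColoring (G □ ⊤) φ)
    (huse : UsesColors φ t) (hind : IndependentEdges (Precolored φ))
    (hcard : (Precolored φ).ncard ≤ k + 1) :
    Extendable (G □ ⊤) φ (t + 1) := by
  classical
  have hcount := (card_copySupport_add_card_rungSupport_le φ).trans hcard
  have hsub : ∀ i, copySupport φ i ⊆ copySupport φ 0 ∪ copySupport φ 1 := by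
    intro i
    fin_cases i
    exacts [Finset.subset_union_left, Finset.subset_union_right]
  obtain ⟨w, hwinj, hw⟩ := hreg.exists_pendant_neighbors htf (U := rungSupport φ)
    (F := copySupport φ 0 ∪ copySupport φ 1)
    (fun e he => by
      rcases Finset.mem_union.1 he with he | he <;>
        simpa using hφ.1 _ ((mem_copySupport φ).1 he))
    (by have := Finset.card_union_le (copySupport φ 0) (copySupport φ 1); omega)
  have hf := pendantEdge_mem_edgeSet hφ.1 fun j hj => (hw j hj).1
  have hfs : ∀ i,
      IsMatchingOn (pendantEdge w) ((copySupport φ i).disjSum (rungSupport φ) : Set _) :=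
    fun i => isMatchingOn_pendantEdge hind hwinj (fun j hj => (hw j hj).2.1)
      fun j hj e he => (hw j hj).2.2 e (hsub i he)
  have hc := pendantColor_lt huse
  by_cases hA : ∀ i, ((copySupport φ i).disjSum (rungSupport φ)).card ≤ k
  · exact extendable_of_forall_card_le h hφ.1 hf hfs hc hA
  · push Not at hA
    obtain ⟨i₀, hi₀⟩ := hA
    rw [Finset.card_disjSum] at hi₀
    refine extendable_of_copySupport_eq_empty h hφ.1 hdeg (hf i₀) (hfs i₀) (hc i₀) ?_
      (Finset.card_pos.1 (by rw [Finset.card_disjSum]; omega)) fun i hi => ?_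
    · rw [Finset.card_disjSum]
      fin_cases i₀ <;> simp at hi₀ ⊢ <;> omega
    · rw [← Finset.card_eq_zero]
      fin_cases i <;> fin_cases i₀ <;> simp only [Fin.zero_eta, Fin.mk_one] at hi hi₀ ⊢ <;>
        first | exact absurd rfl hi | omega

theorem MatchingExtendable.boxProd_top [Fintype V] [Nonempty V] {G : SimpleGraph V}
    [DecidableRel G.Adj] {Δ k t : ℕ} (hreg : G.IsRegularOfDegree Δ) (htf : G.CliqueFree 3)
    (hk : k < Δ) (h : MatchingExtendable G k t) :
    MatchingExtendable (G □ (⊤ : SimpleGraph (Fin 2))) (k + 1) (t + 1) := by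
  obtain ⟨C, hC, hCt⟩ := h.exists_isProperEdgeColoring
  have hdeg := hC.degree_le hCt
  have hΔt : Δ ≤ t := hreg (Classical.arbitrary V) ▸ hdeg _
  intro φ hφ huse hind hcard
  exact extendable_of_forall_usesColors hφ huse (by omega) fun ψ hψ hψt hψφ =>
    extendable_boxProd_top_of_usesColors hreg htf hk h hdeg hψ hψt (hψφ ▸ hind) (hψφ ▸ hcard)

theorem stmt14 [Fintype V] (G : SimpleGraph V) [DecidableRel G.Adj]
    (hreg : G.IsRegularOfDegree G.maxDegree) (htf : G.CliqueFree 3)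
    (k : ℕ) (hk : k < G.maxDegree)
    (hext : ∀ φ : Sym2 V → Option ℕ, IsPartialProperEdgeColoring G φ →
      UsesColors φ (chromaticIndex G) → IndependentEdges (Precolored φ) →
      (Precolored φ).ncard ≤ k → Extendable G φ (chromaticIndex G)) :
    ∀ φ : Sym2 (V × Fin 2) → Option ℕ,
      IsPartialProperEdgeColoring (G.boxProd (⊤ : SimpleGraph (Fin 2))) φ →
      UsesColors φ (chromaticIndex G + 1) → IndependentEdges (Precolored φ) →
      (Precolored φ).ncard ≤ k + 1 →
      Extendable (G.boxProd (⊤ : SimpleGraph (Fin 2))) φ (chromaticIndex G + 1) := by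
  have : Nonempty V := by
    by_contra hV
    have : IsEmpty V := not_nonempty_iff.1 hV
    have := G.maxDegree_of_subsingleton
    omega
  exact MatchingExtendable.boxProd_top hreg htf hk hext
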